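/- arXiv:2202.10394 — 5 statements merged into one kernel-verified Lean document; each statement's English description precedes it below -/
import Mathlib

section
/- Let a ∈ ℝ and let f : ℝ → ℝ be Lebesgue integrable on every compact subinterval of [a,∞). Define F(x) := ∫_a^x f for x ≥ a. Then for almost every x ∈ (a,∞) the following holds: for every δ ∈ (0, x−a), lim_{s→∞} s² ∫_0^δ e^{−st}(F(x+t) − F(x)) dt = f(x) and lim_{s→∞} (−s²) ∫_0^δ e^{−st}(F(x−t) − F(x)) dt = f(x); in particular, the Laplace derivative LD₁F(x) exists and equals f(x) for almost every x ∈ (a,∞). -/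
/-!
By the Lebesgue differentiation theorem, `F y = ∫ u in a..y, f u` has derivative `f x` at almost
every `x > a`, so it suffices to show that both Laplace limits at a point of differentiability equal
the derivative. The kernel `s² t e^{-st}` is a probability density on `[0, ∞)` that concentrates at
`0` as `s → ∞`: `s² ∫₀^δ t e^{-st} dt = 1 - (sδ + 1) e^{-sδ}`. Writing
`F (x + t) - F x = F' x * t + r t` with `r t = o(t)`, the contribution of `r` on `(0, η]` is at most
`ε` once `|r t| ≤ ε t` there, while on `[η, δ]` it is `O(s² e^{-sη}) → 0`.
-/

open MeasureTheory Filter Topology intervalIntegral Set Real Asymptotics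

theorem tendsto_pow_mul_exp_neg_mul_atTop_nhds_zero (n : ℕ) {c : ℝ} (hc : 0 < c) :
    Tendsto (fun s : ℝ => s ^ n * exp (-s * c)) atTop (𝓝 0) := by
  simpa [mul_comm c, ← Real.rpow_natCast] using tendsto_rpow_mul_exp_neg_mul_atTop_nhds_zero n c hc

theorem sq_mul_integral_exp_neg_mul_mul_self (s c : ℝ) :
    s ^ 2 * ∫ t in (0:ℝ)..c, exp (-s * t) * t = 1 - (s * c + 1) * exp (-s * c) := by
  have hderiv : ∀ t ∈ uIcc (0:ℝ) c, HasDerivAt (fun u => (-s * u - 1) * exp (-s * u))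
      (s ^ 2 * (exp (-s * t) * t)) t := by
    intro t _
    have h₁ : HasDerivAt (fun u => -s * u - 1) (-s) t := by
      simpa using ((hasDerivAt_id' t).const_mul (-s)).sub_const 1
    have h₂ : HasDerivAt (fun u => exp (-s * u)) (exp (-s * t) * -s) t := by
      simpa using ((hasDerivAt_id t).const_mul (-s)).exp
    exact (h₁.mul h₂).congr_deriv (by ring)
  rw [← intervalIntegral.integral_const_mul,
    intervalIntegral.integral_eq_sub_of_hasDerivAt hderiv
      (Continuous.intervalIntegrable (by fun_prop) _ _)]
  simp only [neg_mul, mul_zero, zero_sub, exp_zero, mul_one, sub_neg_eq_add]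
  ring

theorem sq_mul_integral_exp_neg_mul_mul_self_le_one {s c : ℝ} (hs : 0 ≤ s) (hc : 0 ≤ c) :
    s ^ 2 * ∫ t in (0:ℝ)..c, exp (-s * t) * t ≤ 1 := by
  rw [sq_mul_integral_exp_neg_mul_mul_self]
  have : 0 ≤ (s * c + 1) * exp (-s * c) := by positivity
  linarith

theorem tendsto_sq_mul_integral_exp_neg_mul_mul_self {c : ℝ} (hc : 0 < c) :
    Tendsto (fun s : ℝ => s ^ 2 * ∫ t in (0:ℝ)..c, exp (-s * t) * t) atTop (𝓝 1) := by
  have h : Tendsto (fun s : ℝ => (s * c + 1) * exp (-s * c)) atTop (𝓝 0) := by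
    have := ((tendsto_pow_mul_exp_neg_mul_atTop_nhds_zero 1 hc).const_mul c).add
      (tendsto_pow_mul_exp_neg_mul_atTop_nhds_zero 0 hc)
    rw [mul_zero, add_zero] at this
    exact this.congr fun s => by ring
  simp only [sq_mul_integral_exp_neg_mul_mul_self]
  simpa using h.const_sub 1

theorem abs_sq_mul_integral_exp_neg_mul_le {r : ℝ → ℝ} {s η c : ℝ} (hs : 0 ≤ s) (hη : 0 ≤ η)
    (hc : 0 ≤ c) (hr : ∀ t ∈ Ioc 0 η, |r t| ≤ c * t) :
    |s ^ 2 * ∫ t in (0:ℝ)..η, exp (-s * t) * r t| ≤ c := by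
  have hpointwise : ∀ t ∈ Ioc 0 η, ‖exp (-s * t) * r t‖ ≤ c * (exp (-s * t) * t) := by
    intro t ht
    rw [norm_mul, norm_of_nonneg (exp_pos _).le, Real.norm_eq_abs, mul_left_comm]
    exact mul_le_mul_of_nonneg_left (hr t ht) (exp_pos _).le
  calc |s ^ 2 * ∫ t in (0:ℝ)..η, exp (-s * t) * r t|
      = s ^ 2 * ‖∫ t in (0:ℝ)..η, exp (-s * t) * r t‖ := by
        rw [abs_mul, abs_of_nonneg (sq_nonneg s), Real.norm_eq_abs]
    _ ≤ s ^ 2 * ∫ t in (0:ℝ)..η, c * (exp (-s * t) * t) := by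
        gcongr
        exact norm_integral_le_of_norm_le hη (ae_of_all _ hpointwise)
          (Continuous.intervalIntegrable (by fun_prop) _ _)
    _ = c * (s ^ 2 * ∫ t in (0:ℝ)..η, exp (-s * t) * t) := by
        rw [intervalIntegral.integral_const_mul]; ring
    _ ≤ c * 1 := by gcongr; exact sq_mul_integral_exp_neg_mul_mul_self_le_one hs hη
    _ = c := mul_one c

theorem tendsto_sq_mul_integral_exp_neg_mul_nhds_zero_of_pos {r : ℝ → ℝ} {η δ : ℝ} (hη : 0 < η)
    (hηδ : η ≤ δ) (hr : IntervalIntegrable r volume η δ) :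
    Tendsto (fun s : ℝ => s ^ 2 * ∫ t in η..δ, exp (-s * t) * r t) atTop (𝓝 0) := by
  have hbound : ∀ s, 0 ≤ s →
      ‖∫ t in η..δ, exp (-s * t) * r t‖ ≤ exp (-s * η) * ∫ t in η..δ, |r t| := by
    intro s hs
    rw [← intervalIntegral.integral_const_mul]
    refine norm_integral_le_of_norm_le hηδ (ae_of_all _ fun t ht => ?_) (hr.abs.const_mul _)
    rw [norm_mul, norm_of_nonneg (exp_pos _).le, Real.norm_eq_abs]
    have hexp : -s * t ≤ -s * η := by nlinarith [ht.1]
    exact mul_le_mul_of_nonneg_right (exp_le_exp.2 hexp) (abs_nonneg _)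
  have hlim := (tendsto_pow_mul_exp_neg_mul_atTop_nhds_zero 2 hη).mul_const (∫ t in η..δ, |r t|)
  rw [zero_mul] at hlim
  refine squeeze_zero_norm' ?_ hlim
  filter_upwards [eventually_ge_atTop 0] with s hs
  rw [norm_mul, norm_of_nonneg (sq_nonneg s), mul_assoc]
  exact mul_le_mul_of_nonneg_left (hbound s hs) (sq_nonneg s)

theorem tendsto_sq_mul_integral_exp_neg_mul_of_isLittleO {r : ℝ → ℝ} {δ : ℝ} (hδ : 0 < δ)
    (hr : IntervalIntegrable r volume 0 δ) (ho : r =o[𝓝[>] 0] id) :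
    Tendsto (fun s : ℝ => s ^ 2 * ∫ t in (0:ℝ)..δ, exp (-s * t) * r t) atTop (𝓝 0) := by
  rw [Metric.tendsto_nhds]
  intro ε hε
  obtain ⟨η, hη, hrη⟩ : ∃ η ∈ Ioc 0 δ, ∀ t ∈ Ioc 0 η, |r t| ≤ ε / 2 * t := by
    obtain ⟨η', hη', hsub⟩ := mem_nhdsGT_iff_exists_Ioc_subset.1 (ho.bound (half_pos hε))
    refine ⟨min η' δ, ⟨lt_min hη' hδ, min_le_right _ _⟩, fun t ht => ?_⟩
    simpa [abs_of_pos ht.1] using hsub ⟨ht.1, ht.2.trans (min_le_left _ _)⟩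
  have hηδ : η ∈ uIcc 0 δ := Icc_subset_uIcc (Ioc_subset_Icc_self hη)
  have htail := tendsto_sq_mul_integral_exp_neg_mul_nhds_zero_of_pos hη.1 hη.2
    (hr.mono_set (uIcc_subset_uIcc_right hηδ))
  filter_upwards [htail.eventually (Metric.ball_mem_nhds 0 (half_pos hε)),
    eventually_ge_atTop 0] with s hs_tail hs
  have hint : IntervalIntegrable (fun t => exp (-s * t) * r t) volume 0 δ :=
    hr.continuousOn_mul (by fun_prop)
  rw [dist_zero_right] at hs_tail
  rw [dist_zero_right, ← integral_add_adjacent_intervals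
    (hint.mono_set (uIcc_subset_uIcc_left hηδ)) (hint.mono_set (uIcc_subset_uIcc_right hηδ)),
    mul_add]
  calc _ ≤ _ := norm_add_le _ _
    _ < ε / 2 + ε / 2 := add_lt_add_of_le_of_lt
      (abs_sq_mul_integral_exp_neg_mul_le hs hη.1.le (half_pos hε).le hrη) hs_tail
    _ = ε := add_halves ε

theorem tendsto_sq_mul_integral_exp_neg_mul_of_hasDerivWithinAt {g : ℝ → ℝ} {L δ : ℝ}
    (hδ : 0 < δ) (hg : IntervalIntegrable g volume 0 δ) (hg₀ : g 0 = 0)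
    (hderiv : HasDerivWithinAt g L (Ioi 0) 0) :
    Tendsto (fun s : ℝ => s ^ 2 * ∫ t in (0:ℝ)..δ, exp (-s * t) * g t) atTop (𝓝 L) := by
  have ho : (fun t => g t - L * t) =o[𝓝[>] 0] fun t => t := by
    simpa [hg₀, mul_comm] using hderiv.isLittleO
  have hr : IntervalIntegrable (fun t => g t - L * t) volume 0 δ :=
    hg.sub ((continuous_const.mul continuous_id').intervalIntegrable _ _)
  have hsplit : ∀ s : ℝ, s ^ 2 * ∫ t in (0:ℝ)..δ, exp (-s * t) * g t =
      L * (s ^ 2 * ∫ t in (0:ℝ)..δ, exp (-s * t) * t)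
        + s ^ 2 * ∫ t in (0:ℝ)..δ, exp (-s * t) * (g t - L * t) := by
    intro s
    have hexp : Continuous fun t => exp (-s * t) := by fun_prop
    rw [mul_left_comm L, ← mul_add, ← intervalIntegral.integral_const_mul L,
      ← intervalIntegral.integral_add
        ((by fun_prop : Continuous fun t => L * (exp (-s * t) * t)).intervalIntegrable _ _)
        (hr.continuousOn_mul hexp.continuousOn)]
    congr 1
    exact integral_congr fun t _ => by ring
  have := ((tendsto_sq_mul_integral_exp_neg_mul_mul_self hδ).const_mul L).add
    (tendsto_sq_mul_integral_exp_neg_mul_of_isLittleO hδ hr ho)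
  simpa only [hsplit, mul_one, add_zero] using this

theorem ae_hasDerivAt_integral_of_integrableOn_Icc {E : Type*} [NormedAddCommGroup E]
    [NormedSpace ℝ E] [CompleteSpace E] {f : ℝ → E} {a : ℝ}
    (hf : ∀ c, a ≤ c → IntegrableOn f (Icc a c)) :
    ∀ᵐ x, a < x → HasDerivAt (fun y => ∫ u in a..y, f u) (f x) x := by
  have h : ∀ᵐ x, ∀ n : ℕ, x ∈ uIcc a (a + n) →
      HasDerivAt (fun y => ∫ u in a..y, f u) (f x) x := by
    refine ae_all_iff.2 fun n => ?_
    have hn : a ≤ a + n := le_add_of_nonneg_right n.cast_nonneg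
    have hfn : IntervalIntegrable f volume a (a + n) :=
      (intervalIntegrable_iff_integrableOn_Icc_of_le hn).2 (hf _ hn)
    filter_upwards [hfn.ae_hasDerivAt_integral] with x hx hxn using hx hxn a left_mem_uIcc
  filter_upwards [h] with x hx hax
  obtain ⟨n, hn⟩ := exists_nat_ge (x - a)
  exact hx n (Icc_subset_uIcc ⟨hax.le, by linarith⟩)

theorem tendsto_sq_mul_integral_exp_neg_mul_sub_of_hasDerivAt {F : ℝ → ℝ} {L x δ : ℝ} (hδ : 0 < δ)
    (hF : IntervalIntegrable F volume (x - δ) (x + δ)) (hD : HasDerivAt F L x) :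
    Tendsto (fun s : ℝ => s ^ 2 * ∫ t in (0:ℝ)..δ, exp (-s * t) * (F (x + t) - F x))
        atTop (𝓝 L) ∧
      Tendsto (fun s : ℝ => -s ^ 2 * ∫ t in (0:ℝ)..δ, exp (-s * t) * (F (x - t) - F x))
        atTop (𝓝 L) := by
  have hx : x ∈ uIcc (x - δ) (x + δ) := by
    rw [uIcc_of_le (by linarith)]; constructor <;> linarith
  have hright : IntervalIntegrable (fun t => F (x + t)) volume 0 δ := by
    simpa using (hF.mono_set (uIcc_subset_uIcc_right hx)).comp_add_left x
  have hleft : IntervalIntegrable (fun t => F (x - t)) volume 0 δ := by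
    simpa using ((hF.mono_set (uIcc_subset_uIcc_left hx)).comp_sub_left x).symm
  have hDright : HasDerivAt (fun t => F (x + t) - F x) L 0 :=
    (HasDerivAt.comp_const_add x 0 (by rwa [add_zero])).sub_const _
  have hDleft : HasDerivAt (fun t => F x - F (x - t)) L 0 := by
    simpa using (HasDerivAt.comp_const_sub x 0 (by rwa [sub_zero])).const_sub (F x)
  constructor
  · exact tendsto_sq_mul_integral_exp_neg_mul_of_hasDerivWithinAt hδ
      (hright.sub intervalIntegrable_const) (by simp) hDright.hasDerivWithinAt
  · refine (tendsto_sq_mul_integral_exp_neg_mul_of_hasDerivWithinAt hδ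
      (intervalIntegrable_const.sub hleft) (by simp) hDleft.hasDerivWithinAt).congr fun s => ?_
    rw [neg_mul, ← mul_neg, ← intervalIntegral.integral_neg]
    congr 1
    exact integral_congr fun t _ => by ring

/-- **Fundamental theorem of calculus for the Laplace derivative.**
If `f` is Lebesgue integrable on every compact subinterval of `[a,∞)` and
`F x = ∫_a^x f`, then for almost every `x ∈ (a,∞)` and every `δ ∈ (0, x - a)` the two
one-sided Laplace-derivative limits of `F` at `x` exist and equal `f x`; in particular
`LD₁F = f` a.e. on `(a,∞)`. -/
theorem laplaceDeriv_of_primitive (a : ℝ) (f : ℝ → ℝ)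
    (hf : ∀ c, a ≤ c → IntegrableOn f (Set.Icc a c)) :
    ∀ᵐ x : ℝ, x ∈ Set.Ioi a → ∀ δ : ℝ, 0 < δ → δ < x - a →
      Tendsto (fun s : ℝ => s ^ 2 *
          ∫ t in (0:ℝ)..δ, Real.exp (-s * t) *
            ((∫ u in a..(x + t), f u) - ∫ u in a..x, f u))
        atTop (𝓝 (f x)) ∧
      Tendsto (fun s : ℝ => -s ^ 2 *
          ∫ t in (0:ℝ)..δ, Real.exp (-s * t) *
            ((∫ u in a..(x - t), f u) - ∫ u in a..x, f u))
        atTop (𝓝 (f x)) := by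
  filter_upwards [ae_hasDerivAt_integral_of_integrableOn_Icc hf] with x hD hxa δ hδ hδx
  have hxδ : a ≤ x + δ := by linarith [mem_Ioi.1 hxa]
  have hcont : ContinuousOn (fun y => ∫ u in a..y, f u) (Icc a (x + δ)) := by
    rw [← uIcc_of_le hxδ]
    exact continuousOn_primitive_interval (by rw [uIcc_of_le hxδ]; exact hf _ hxδ)
  have hint : IntervalIntegrable (fun y => ∫ u in a..y, f u) volume (x - δ) (x + δ) := by
    refine (hcont.mono ?_).intervalIntegrable
    rw [uIcc_of_le (by linarith)]
    exact Icc_subset_Icc (by linarith) le_rfl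
  exact tendsto_sq_mul_integral_exp_neg_mul_sub_of_hasDerivAt (F := fun y => ∫ u in a..y, f u)
    hδ hint (hD hxa)
end

section
/- Let a ∈ ℝ and let f : [a,∞) → ℝ be Lebesgue integrable on every compact subinterval of [a,∞) such that F(x) := ∫_a^x f is bounded on [a,∞). Let g : [a,∞) → ℝ be Lebesgue integrable on [a,∞) and of bounded variation on [a,∞), and set G(x) := ∫_a^x g. If lim_{x→∞} F(x)G(x) exists, then Fg is Lebesgue integrable on [a,∞), the improper integral ∫_a^∞ fG exists, and ∫_a^∞ fG = lim_{x→∞} F(x)G(x) − ∫_a^∞ Fg. -/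
/-!
On a compact interval `[a, c]` the primitives `F` and `G` are absolutely continuous with
derivatives `f` and `g` almost everywhere, so integration by parts gives
`∫_a^c f G = F(c) G(c) - ∫_a^c F g`. As `F` is continuous and bounded on `[a, ∞)` and `g` is
integrable there, `F g` is integrable on `[a, ∞)`, so `∫_a^c F g → ∫_a^∞ F g` and the right-hand
side converges to `L - ∫_a^∞ F g`.
-/

open MeasureTheory Filter Topology intervalIntegral

theorem IntervalIntegrable.ae_deriv_primitive_eq {f : ℝ → ℝ} {a b : ℝ}
    (hf : IntervalIntegrable f volume a b) :
    ∀ᵐ x, x ∈ Set.uIoc a b → deriv (fun x => ∫ t in a..x, f t) x = f x := by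
  filter_upwards [hf.ae_hasDerivAt_integral] with x hx hxab
  exact (hx (Set.uIoc_subset_uIcc hxab) a Set.left_mem_uIcc).deriv

theorem intervalIntegral.integral_mul_primitive_eq_sub {f g : ℝ → ℝ} {a b : ℝ}
    (hf : IntervalIntegrable f volume a b) (hg : IntervalIntegrable g volume a b) :
    ∫ x in a..b, f x * ∫ t in a..x, g t =
      (∫ t in a..b, f t) * (∫ t in a..b, g t) - ∫ x in a..b, (∫ t in a..x, f t) * g x := by
  have hF := hf.absolutelyContinuousOnInterval_intervalIntegral Set.left_mem_uIcc
  have hG := hg.absolutelyContinuousOnInterval_intervalIntegral Set.left_mem_uIcc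
  have hfG : ∫ x in a..b, f x * ∫ t in a..x, g t =
      ∫ x in a..b, (∫ t in a..x, g t) * deriv (fun y => ∫ t in a..y, f t) x := by
    refine intervalIntegral.integral_congr_ae ?_
    filter_upwards [hf.ae_deriv_primitive_eq] with x hx hxab
    rw [hx hxab, mul_comm]
  have hFg : ∫ x in a..b, (∫ t in a..x, f t) * g x =
      ∫ x in a..b, deriv (fun y => ∫ t in a..y, g t) x * ∫ t in a..x, f t := by
    refine intervalIntegral.integral_congr_ae ?_
    filter_upwards [hg.ae_deriv_primitive_eq] with x hx hxab
    rw [hx hxab, mul_comm]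
  rw [hfG, hFg, hG.integral_mul_deriv_eq_deriv_mul hF, integral_same]
  ring

theorem intervalIntegral.continuousOn_primitive_Ici {f : ℝ → ℝ} {a : ℝ}
    (hf : ∀ c, a ≤ c → IntegrableOn f (Set.Icc a c)) :
    ContinuousOn (fun x => ∫ t in a..x, f t) (Set.Ici a) := by
  intro x hx
  have hax : a ≤ x + 1 := by linarith [Set.mem_Ici.mp hx]
  have hcont := continuousOn_primitive_interval (Set.uIcc_of_le hax ▸ hf (x + 1) hax)
  rw [Set.uIcc_of_le hax, ← Set.Ici_inter_Iic] at hcont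
  exact (hcont x ⟨hx, by simp⟩).mono_of_mem_nhdsWithin
    (inter_mem_nhdsWithin _ (Iic_mem_nhds (lt_add_one x)))

theorem du_bois_reymond_general (a : ℝ) (f g : ℝ → ℝ) (L : ℝ)
    (hf : ∀ c, a ≤ c → IntegrableOn f (Set.Icc a c))
    (F : ℝ → ℝ) (hF : ∀ x, F x = ∫ t in a..x, f t)
    (hFbd : ∃ M : ℝ, ∀ x, a ≤ x → |F x| ≤ M)
    (hg : IntegrableOn g (Set.Ici a))
    (G : ℝ → ℝ) (hG : ∀ x, G x = ∫ t in a..x, g t)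
    (hlim : Tendsto (fun x => F x * G x) atTop (𝓝 L)) :
    IntegrableOn (fun x => F x * g x) (Set.Ici a) ∧
    Tendsto (fun c => ∫ x in a..c, f x * G x) atTop
      (𝓝 (L - ∫ x in Set.Ici a, F x * g x)) := by
  obtain rfl : F = fun x => ∫ t in a..x, f t := funext hF
  obtain rfl : G = fun x => ∫ t in a..x, g t := funext hG
  obtain ⟨M, hM⟩ := hFbd
  have hFg : IntegrableOn (fun x => (∫ t in a..x, f t) * g x) (Set.Ici a) :=
    hg.bdd_mul ((continuousOn_primitive_Ici hf).aestronglyMeasurable measurableSet_Ici)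
      ((ae_restrict_iff' measurableSet_Ici).mpr (ae_of_all _ hM))
  refine ⟨hFg, ?_⟩
  have hFg_lim : Tendsto (fun c => ∫ x in a..c, (∫ t in a..x, f t) * g x) atTop
      (𝓝 (∫ x in Set.Ici a, (∫ t in a..x, f t) * g x)) := by
    rw [integral_Ici_eq_integral_Ioi]
    exact intervalIntegral_tendsto_integral_Ioi a (hFg.mono_set Set.Ioi_subset_Ici_self)
      tendsto_id
  refine (hlim.sub hFg_lim).congr' ?_
  filter_upwards [eventually_ge_atTop a] with c hac
  have hfc : IntervalIntegrable f volume a c :=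
    (intervalIntegrable_iff_integrableOn_Icc_of_le hac).mpr (hf c hac)
  have hgc : IntervalIntegrable g volume a c :=
    (intervalIntegrable_iff_integrableOn_Icc_of_le hac).mpr
      (hg.mono_set Set.Icc_subset_Ici_self)
  rw [integral_mul_primitive_eq_sub hfc hgc]

/-- **Du Bois-Reymond's theorem.**
Suppose `f` is Lebesgue integrable on every compact subinterval of `[a,∞)` with bounded
primitive `F x = ∫_a^x f`, and `g` is Lebesgue integrable and of bounded variation on
`[a,∞)` with `G x = ∫_a^x g`. If `lim_{x→∞} F x * G x` exists, then `F·g` is Lebesgue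
integrable on `[a,∞)`, the improper integral `∫_a^∞ f·G` exists, and it equals
`lim_{x→∞} F x * G x − ∫_a^∞ F·g`. -/
theorem du_bois_reymond (a : ℝ) (f g : ℝ → ℝ) (L : ℝ)
    (hf : ∀ c, a ≤ c → IntegrableOn f (Set.Icc a c))
    (F : ℝ → ℝ) (hF : ∀ x, F x = ∫ t in a..x, f t)
    (hFbd : ∃ M : ℝ, ∀ x, a ≤ x → |F x| ≤ M)
    (hg : IntegrableOn g (Set.Ici a))
    (hgBV : BoundedVariationOn g (Set.Ici a))
    (G : ℝ → ℝ) (hG : ∀ x, G x = ∫ t in a..x, g t)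
    (hlim : Tendsto (fun x => F x * G x) atTop (𝓝 L)) :
    IntegrableOn (fun x => F x * g x) (Set.Ici a) ∧
    Tendsto (fun c => ∫ x in a..c, f x * G x) atTop
      (𝓝 (L - ∫ x in Set.Ici a, F x * g x)) :=
  du_bois_reymond_general a f g L hf F hF hFbd hg G hG hlim
end

section
/- Let a ∈ ℝ and let f : [a,∞) → ℝ be Lebesgue integrable on every compact subinterval of [a,∞) such that the improper integral ∫_a^∞ f exists. Let (g_n) be a sequence of measurable functions on [a,∞), each Lebesgue integrable on [a,∞) and of bounded variation on [a,∞), with sup_n (‖g_n‖_{L¹[a,∞)} + V_{[a,∞)}[g_n]) < ∞. Set G_n(x) := ∫_a^x g_n and suppose G_n converges pointwise on [a,∞) to a function G. Then for each n the improper integral ∫_a^∞ fG_n exists, the improper integral ∫_a^∞ fG exists, and lim_{n→∞} ∫_a^∞ fG_n = ∫_a^∞ fG. -/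
/-!
Write `Gₙ x = ∫_a^x gₙ`. Integrating by parts against the absolutely continuous primitive
`x ↦ ∫_v^x f` gives Dirichlet's formula
`∫_u^v f Gₙ = Gₙ(u) ∫_u^v f + ∫_u^v (∫_x^v f) gₙ(x) dx`, hence
`|∫_u^v f Gₙ| ≤ ‖gₙ‖₁ · sup_{x ∈ [u,v]} |∫_x^v f|`.
By the Cauchy criterion for `∫_a^∞ f`, the integrals `c ↦ ∫_a^c f Gₙ` are therefore Cauchy as
`c → ∞` uniformly in `n`. On each `[a, c]` dominated convergence (with `|Gₙ| ≤ supₙ ‖gₙ‖₁`) gives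
`∫_a^c f Gₙ → ∫_a^c f G`, and uniform convergence lets the two limits be interchanged
(Moore–Osgood).
-/

open MeasureTheory Filter Topology intervalIntegral Set

theorem exists_tendsto_limits_of_uniformCauchySeqOn {α β E : Type*} [Nonempty α]
    [SemilatticeSup α] [PseudoMetricSpace E] [CompleteSpace E] {p : Filter β} [p.NeBot]
    {F : α → β → E} {K : α → E} (hF : UniformCauchySeqOn F atTop univ)
    (hK : ∀ᶠ c in atTop, Tendsto (F c) p (𝓝 (K c))) :
    ∃ I : β → E, ∃ J : E, (∀ n, Tendsto (fun c => F c n) atTop (𝓝 (I n))) ∧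
      Tendsto K atTop (𝓝 J) ∧ Tendsto I p (𝓝 J) := by
  choose I hI using fun n => cauchy_map_iff_exists_tendsto.1 (hF.cauchy_map (mem_univ n))
  have hK_cauchy : CauchySeq K := by
    rw [Metric.cauchySeq_iff]
    intro ε hε
    obtain ⟨N₁, hN₁⟩ := Metric.uniformCauchySeqOn_iff.1 hF (ε / 2) (half_pos hε)
    obtain ⟨N₂, hN₂⟩ := eventually_atTop.1 hK
    refine ⟨N₁ ⊔ N₂, fun m hm c hc => ?_⟩
    have hle : dist (K m) (K c) ≤ ε / 2 :=
      le_of_tendsto ((hN₂ m (le_sup_right.trans hm)).dist (hN₂ c (le_sup_right.trans hc)))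
        (Eventually.of_forall fun n =>
          (hN₁ m (le_sup_left.trans hm) c (le_sup_left.trans hc) n (mem_univ n)).le)
    linarith
  obtain ⟨J, hJ⟩ := cauchySeq_tendsto_of_complete hK_cauchy
  have hunif : TendstoUniformly F I atTop :=
    tendstoUniformlyOn_univ.1 (hF.tendstoUniformlyOn_of_tendsto fun n _ => hI n)
  exact ⟨I, J, hI, hJ, hunif.tendsto_of_eventually_tendsto hK hJ⟩

theorem integral_mul_primitive_eq_integral_tail_mul {f g : ℝ → ℝ} {u v : ℝ}
    (hf : IntervalIntegrable f volume u v) (hg : IntervalIntegrable g volume u v) :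
    ∫ x in u..v, f x * ∫ t in u..x, g t = ∫ x in u..v, (∫ t in x..v, f t) * g x := by
  have hF := hf.absolutelyContinuousOnInterval_intervalIntegral (c := v) right_mem_uIcc
  have hG := hg.absolutelyContinuousOnInterval_intervalIntegral (c := u) left_mem_uIcc
  have hparts := hG.integral_mul_deriv_eq_deriv_mul hF
  simp only [integral_same, mul_zero, zero_mul, sub_zero, zero_sub] at hparts
  have hderiv_f : ∀ᵐ x, x ∈ uIoc u v → f x * ∫ t in u..x, g t
      = (∫ t in u..x, g t) * deriv (fun x => ∫ t in v..x, f t) x := by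
    filter_upwards [hf.ae_hasDerivAt_integral] with x hx hxI
    rw [(hx (uIoc_subset_uIcc hxI) v right_mem_uIcc).deriv, mul_comm]
  have hderiv_g : ∀ᵐ x, x ∈ uIoc u v → deriv (fun x => ∫ t in u..x, g t) x * ∫ t in v..x, f t
      = -((∫ t in x..v, f t) * g x) := by
    filter_upwards [hg.ae_hasDerivAt_integral] with x hx hxI
    rw [(hx (uIoc_subset_uIcc hxI) u left_mem_uIcc).deriv, integral_symm x v]
    ring
  rw [integral_congr_ae hderiv_f, hparts, integral_congr_ae hderiv_g,
    intervalIntegral.integral_neg, neg_neg]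

theorem abs_integral_mul_primitive_le {f g : ℝ → ℝ} {a u v ε : ℝ} (hau : a ≤ u) (huv : u ≤ v)
    (hf : IntervalIntegrable f volume u v) (hg : IntervalIntegrable g volume a v)
    (hfε : ∀ x ∈ Icc u v, |∫ t in x..v, f t| ≤ ε) :
    |∫ x in u..v, f x * ∫ t in a..x, g t| ≤ ε * ∫ t in a..v, |g t| := by
  have hu : u ∈ uIcc a v := by rw [uIcc_of_le (hau.trans huv)]; exact ⟨hau, huv⟩
  have hga : IntervalIntegrable g volume a u := hg.mono_set (uIcc_subset_uIcc_left hu)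
  have hgu : IntervalIntegrable g volume u v := hg.mono_set (uIcc_subset_uIcc_right hu)
  have hsplit : ∫ x in u..v, f x * ∫ t in a..x, g t
      = (∫ t in a..u, g t) * (∫ t in u..v, f t) + ∫ x in u..v, (∫ t in x..v, f t) * g x := by
    have hcongr : EqOn (fun x => f x * ∫ t in a..x, g t)
        (fun x => (∫ t in a..u, g t) * f x + f x * ∫ t in u..x, g t) (uIcc u v) := by
      intro x hx
      dsimp only
      rw [← integral_add_adjacent_intervals hga (hgu.mono_set (uIcc_subset_uIcc_left hx))]
      ring
    rw [integral_congr hcongr, integral_add (hf.const_mul _)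
      (hf.mul_continuousOn (continuousOn_primitive_interval' hgu left_mem_uIcc)),
      intervalIntegral.integral_const_mul, integral_mul_primitive_eq_integral_tail_mul hf hgu]
  have hε : 0 ≤ ε := (abs_nonneg _).trans (hfε v ⟨huv, le_rfl⟩)
  have hhead : |(∫ t in a..u, g t) * ∫ t in u..v, f t| ≤ (∫ t in a..u, |g t|) * ε := by
    rw [abs_mul]
    exact mul_le_mul (abs_integral_le_integral_abs hau) (hfε u ⟨le_rfl, huv⟩) (abs_nonneg _)
      (integral_nonneg hau fun _ _ => abs_nonneg _)
  have htail : |∫ x in u..v, (∫ t in x..v, f t) * g x| ≤ ε * ∫ t in u..v, |g t| := by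
    rw [← intervalIntegral.integral_const_mul, ← Real.norm_eq_abs]
    refine norm_integral_le_of_norm_le huv (Eventually.of_forall fun x hx => ?_)
      (hgu.abs.const_mul ε)
    rw [Real.norm_eq_abs, abs_mul]
    exact mul_le_mul_of_nonneg_right (hfε x (Ioc_subset_Icc_self hx)) (abs_nonneg _)
  calc |∫ x in u..v, f x * ∫ t in a..x, g t|
      ≤ (∫ t in a..u, |g t|) * ε + ε * ∫ t in u..v, |g t| := by
        rw [hsplit]; exact (abs_add_le _ _).trans (add_le_add hhead htail)
    _ = ε * ∫ t in a..v, |g t| := by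
        rw [← integral_add_adjacent_intervals hga.abs hgu.abs]; ring

theorem uniformCauchySeqOn_integral_mul_primitive {ι : Type*} {f : ℝ → ℝ} {g : ι → ℝ → ℝ}
    {a M : ℝ} (hf : ∀ c, a ≤ c → IntervalIntegrable f volume a c)
    (hf_cauchy : CauchySeq fun c => ∫ x in a..c, f x)
    (hg : ∀ i c, a ≤ c → IntervalIntegrable (g i) volume a c)
    (hgM : ∀ i c, a ≤ c → ∫ t in a..c, |g i t| ≤ M) :
    UniformCauchySeqOn (fun c i => ∫ x in a..c, f x * ∫ t in a..x, g i t) atTop univ := by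
  rw [Metric.uniformCauchySeqOn_iff]
  intro ε hε
  set δ := ε / (|M| + 1)
  have hδ : 0 < δ := by positivity
  have hδM : δ * M < ε := by
    calc δ * M ≤ δ * |M| := mul_le_mul_of_nonneg_left (le_abs_self M) hδ.le
      _ < ε := by
        rw [div_mul_eq_mul_div, div_lt_iff₀ (by positivity)]
        nlinarith
  obtain ⟨N, hN⟩ := Metric.cauchySeq_iff.1 hf_cauchy δ hδ
  have hincr : ∀ u v, N ⊔ a ≤ u → u ≤ v → ∀ i,
      |(∫ x in a..v, f x * ∫ t in a..x, g i t) - ∫ x in a..u, f x * ∫ t in a..x, g i t| < ε := by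
    intro u v hu huv i
    have hau : a ≤ u := le_sup_right.trans hu
    have hav : a ≤ v := hau.trans huv
    have hfG : ∀ c, a ≤ c → IntervalIntegrable (fun x => f x * ∫ t in a..x, g i t) volume a c :=
      fun c hc => (hf c hc).mul_continuousOn
        (continuousOn_primitive_interval' (hg i c hc) left_mem_uIcc)
    have htail : ∀ x ∈ Icc u v, |∫ t in x..v, f t| ≤ δ := by
      intro x hx
      rw [← integral_interval_sub_left (hf v hav) (hf x (hau.trans hx.1)), ← Real.dist_eq]
      exact (hN v (le_sup_left.trans (hu.trans huv)) x (le_sup_left.trans (hu.trans hx.1))).le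
    rw [integral_interval_sub_left (hfG v hav) (hfG u hau)]
    calc _ ≤ δ * ∫ t in a..v, |g i t| :=
          abs_integral_mul_primitive_le hau huv ((hf u hau).symm.trans (hf v hav)) (hg i v hav)
            htail
      _ ≤ δ * M := mul_le_mul_of_nonneg_left (hgM i v hav) hδ.le
      _ < ε := hδM
  refine ⟨N ⊔ a, fun m hm n hn i _ => ?_⟩
  rcases le_total m n with hmn | hnm
  · rw [dist_comm, Real.dist_eq]; exact hincr m n hm hmn i
  · rw [Real.dist_eq]; exact hincr n m hn hnm i

theorem tendsto_integral_mul_of_tendsto_of_abs_le {ι : Type*} {l : Filter ι}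
    [l.IsCountablyGenerated] {f : ℝ → ℝ} {G : ι → ℝ → ℝ} {G' : ℝ → ℝ} {u v M : ℝ}
    (hf : IntervalIntegrable f volume u v) (hG : ∀ i, ContinuousOn (G i) (uIcc u v))
    (hGM : ∀ i, ∀ x ∈ uIcc u v, |G i x| ≤ M)
    (hlim : ∀ x ∈ uIcc u v, Tendsto (fun i => G i x) l (𝓝 (G' x))) :
    Tendsto (fun i => ∫ x in u..v, f x * G i x) l (𝓝 (∫ x in u..v, f x * G' x)) := by
  refine tendsto_integral_filter_of_dominated_convergence (fun x => |f x| * M)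
    (Eventually.of_forall fun i => ?_) (Eventually.of_forall fun i => ?_) (hf.abs.mul_const M)
    (Eventually.of_forall fun x hx => (hlim x (uIoc_subset_uIcc hx)).const_mul (f x))
  · exact (hf.mul_continuousOn (hG i)).def'.aestronglyMeasurable
  · refine Eventually.of_forall fun x hx => ?_
    rw [Real.norm_eq_abs, abs_mul]
    exact mul_le_mul_of_nonneg_left (hGM i x (uIoc_subset_uIcc hx)) (abs_nonneg _)

theorem integral_abs_le_integral_Ici_abs {g : ℝ → ℝ} {a c : ℝ} (hac : a ≤ c)
    (hg : IntegrableOn g (Ici a)) : ∫ t in a..c, |g t| ≤ ∫ t in Ici a, |g t| := by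
  rw [integral_of_le hac]
  exact setIntegral_mono_set hg.abs (Eventually.of_forall fun _ => abs_nonneg _)
    (Ioc_subset_Icc_self.trans Icc_subset_Ici_self).eventuallyLE

theorem tendsto_improper_integral_of_uniform_bounded_variation_general
    (a : ℝ) (f : ℝ → ℝ) (g : ℕ → ℝ → ℝ) (G : ℝ → ℝ)
    (hf : ∀ c, a ≤ c → IntegrableOn f (Set.Icc a c))
    (hfimp : ∃ I : ℝ, Tendsto (fun c => ∫ x in a..c, f x) atTop (𝓝 I))
    (hgint : ∀ n, IntegrableOn (g n) (Set.Ici a))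
    (hub : ∃ M : ℝ, ∀ n,
      (∫ x in Set.Ici a, |g n x|) + (eVariationOn (g n) (Set.Ici a)).toReal ≤ M)
    (hGconv : ∀ x, a ≤ x →
      Tendsto (fun n => ∫ t in a..x, g n t) atTop (𝓝 (G x))) :
    ∃ I : ℕ → ℝ, ∃ J : ℝ,
      (∀ n, Tendsto (fun c => ∫ x in a..c, f x * (∫ t in a..x, g n t)) atTop (𝓝 (I n))) ∧
      Tendsto (fun c => ∫ x in a..c, f x * G x) atTop (𝓝 J) ∧
      Tendsto I atTop (𝓝 J) := by
  obtain ⟨L, hL⟩ := hfimp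
  obtain ⟨M, hM⟩ := hub
  have hfi : ∀ c, a ≤ c → IntervalIntegrable f volume a c :=
    fun c hc => (intervalIntegrable_iff_integrableOn_Icc_of_le hc).2 (hf c hc)
  have hgi : ∀ n c, a ≤ c → IntervalIntegrable (g n) volume a c := fun n c hc =>
    (intervalIntegrable_iff_integrableOn_Icc_of_le hc).2 ((hgint n).mono_set Icc_subset_Ici_self)
  have hgM : ∀ n c, a ≤ c → ∫ t in a..c, |g n t| ≤ M := fun n c hc =>
    (integral_abs_le_integral_Ici_abs hc (hgint n)).trans
      ((le_add_of_nonneg_right ENNReal.toReal_nonneg).trans (hM n))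
  have hlim : ∀ᶠ c in atTop, Tendsto (fun n => ∫ x in a..c, f x * ∫ t in a..x, g n t) atTop
      (𝓝 (∫ x in a..c, f x * G x)) := by
    filter_upwards [eventually_ge_atTop a] with c hc
    refine tendsto_integral_mul_of_tendsto_of_abs_le (M := M) (hfi c hc)
      (fun n => continuousOn_primitive_interval' (hgi n c hc) left_mem_uIcc)
      (fun n x hx => ?_) (fun x hx => hGconv x ?_)
    · rw [uIcc_of_le hc] at hx
      exact (abs_integral_le_integral_abs hx.1).trans (hgM n x hx.1)
    · exact ((uIcc_of_le hc).subset hx).1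
  exact exists_tendsto_limits_of_uniformCauchySeqOn
    (uniformCauchySeqOn_integral_mul_primitive hfi hL.cauchySeq hgi hgM) hlim

/-- **Passing to the limit under the integral sign (Theorem `sequence of integrals`).**
Let `f` be Lebesgue integrable on compact subintervals of `[a,∞)` with convergent improper
integral `∫_a^∞ f`. Let `(gₙ)` be measurable functions on `[a,∞)`, each Lebesgue integrable
and of bounded variation on `[a,∞)`, with `supₙ (‖gₙ‖₁ + V_{[a,∞)}[gₙ]) < ∞`. If
`Gₙ x = ∫_a^x gₙ` converges pointwise on `[a,∞)` to `G`, then each improper integral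
`∫_a^∞ f·Gₙ` exists, the improper integral `∫_a^∞ f·G` exists, and
`limₙ ∫_a^∞ f·Gₙ = ∫_a^∞ f·G`. -/
theorem tendsto_improper_integral_of_uniform_bounded_variation
    (a : ℝ) (f : ℝ → ℝ) (g : ℕ → ℝ → ℝ) (G : ℝ → ℝ)
    (hf : ∀ c, a ≤ c → IntegrableOn f (Set.Icc a c))
    (hfimp : ∃ I : ℝ, Tendsto (fun c => ∫ x in a..c, f x) atTop (𝓝 I))
    (hgmeas : ∀ n, Measurable (g n))
    (hgint : ∀ n, IntegrableOn (g n) (Set.Ici a))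
    (hgBV : ∀ n, BoundedVariationOn (g n) (Set.Ici a))
    (hub : ∃ M : ℝ, ∀ n,
      (∫ x in Set.Ici a, |g n x|) + (eVariationOn (g n) (Set.Ici a)).toReal ≤ M)
    (hGconv : ∀ x, a ≤ x →
      Tendsto (fun n => ∫ t in a..x, g n t) atTop (𝓝 (G x))) :
    ∃ I : ℕ → ℝ, ∃ J : ℝ,
      (∀ n, Tendsto (fun c => ∫ x in a..c, f x * (∫ t in a..x, g n t)) atTop (𝓝 (I n))) ∧
      Tendsto (fun c => ∫ x in a..c, f x * G x) atTop (𝓝 J) ∧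
      Tendsto I atTop (𝓝 J) :=
  tendsto_improper_integral_of_uniform_bounded_variation_general a f g G hf hfimp hgint hub hGconv
end

section
/- Let f : ℝ → ℝ be Lebesgue integrable on every compact interval such that the improper integral F(x) := ∫_{-∞}^x f exists for every x ∈ ℝ and the improper integral ∫_{-∞}^∞ f exists. Let g : ℝ → ℝ be Lebesgue integrable on ℝ and of bounded variation on ℝ, and set G(x) := ∫_{-∞}^x g. Assume F and G are Lebesgue integrable on ℝ and lim_{x→∞} G(x) = 0. Then: (1) for every x ∈ ℝ the improper integral (f*G)(x) := ∫_{-∞}^∞ f(x−y)G(y) dy exists and equals (F*g)(x) = ∫_{-∞}^∞ F(x−y)g(y) dy; (2) for every t ∈ ℝ, ∫_{-∞}^t ∫_{-∞}^∞ f(x−y)G(y) dy dx = ∫_{-∞}^∞ ∫_{-∞}^t f(x−y)G(y) dx dy (the integrals in x being improper); (3) ‖f*G‖_{L¹(ℝ)} ≤ ‖F‖_{L¹(ℝ)} ‖g‖_{L¹(ℝ)} and ‖f*G‖_A ≤ ‖f‖_A ‖G‖_{L¹(ℝ)}, where ‖h‖_A := sup_{t∈ℝ} |∫_{-∞}^t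 h| (improper integrals, the Alexiewicz norm). -/
open MeasureTheory Filter Topology intervalIntegral

/-- The improper integral `∫_{-∞}^∞ h = L`. -/
def HasImpInt (h : ℝ → ℝ) (L : ℝ) : Prop :=
  ∃ L₁ L₂ : ℝ,
    Tendsto (fun c => ∫ x in c..(0:ℝ), h x) atBot (𝓝 L₁) ∧
    Tendsto (fun c => ∫ x in (0:ℝ)..c, h x) atTop (𝓝 L₂) ∧ L = L₁ + L₂

/-! Put `h := F ⋆ g`, which lies in `L¹` because `F, g ∈ L¹`. Since `F` and `G` are absolutely
continuous primitives of `f` and `g`, integration by parts on `[c, d]` gives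
`∫_c^d f(x-y)G(y) dy = F(x-c)G(c) - F(x-d)G(d) + ∫_c^d F(x-y)g(y) dy`; `F` is bounded (continuous
with finite limits at `±∞`) and `G → 0` at `±∞`, so the boundary terms vanish and
`(f ⋆ G)(x) = h(x)`. Fubini gives `∫_{-∞}^t h = ∫ F(t-y)G(y) dy`, which yields the iterated
integral identity and the Alexiewicz bound; the `L¹` bound is `‖F ⋆ g‖₁ ≤ ‖F‖₁ ‖g‖₁`. -/

open Set

section ImproperPrimitive

variable {f F : ℝ → ℝ}

theorem integral_eq_sub_of_tendsto_integral_atBot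
    (hf : ∀ a b, IntervalIntegrable f volume a b)
    (hF : ∀ x, Tendsto (fun c => ∫ t in c..x, f t) atBot (𝓝 (F x))) (a b : ℝ) :
    ∫ t in a..b, f t = F b - F a := by
  have : Tendsto (fun c => ∫ t in c..b, f t) atBot (𝓝 (F a + ∫ t in a..b, f t)) :=
    ((hF a).add_const _).congr fun c => integral_add_adjacent_intervals (hf c a) (hf a b)
  linarith [tendsto_nhds_unique (hF b) this]

theorem continuous_of_integral_eq_sub (hf : ∀ a b, IntervalIntegrable f volume a b)
    (hF : ∀ a b, ∫ t in a..b, f t = F b - F a) : Continuous F := by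
  have : F = fun x => F 0 + ∫ t in (0 : ℝ)..x, f t := funext fun x => by rw [hF]; ring
  exact this ▸ continuous_const.add (continuous_primitive hf 0)

theorem tendsto_atBot_zero_of_tendsto_integral_atBot
    (hf : ∀ a b, IntervalIntegrable f volume a b)
    (hF : ∀ x, Tendsto (fun c => ∫ t in c..x, f t) atBot (𝓝 (F x))) :
    Tendsto F atBot (𝓝 0) := by
  have : Tendsto (fun c => F 0 - ∫ t in c..(0 : ℝ), f t) atBot (𝓝 (F 0 - F 0)) :=
    tendsto_const_nhds.sub (hF 0)
  refine (sub_self (F 0) ▸ this).congr fun c => ?_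
  rw [integral_eq_sub_of_tendsto_integral_atBot hf hF]; ring

theorem tendsto_atTop_of_integral_eq_sub {L : ℝ} (hF : ∀ a b, ∫ t in a..b, f t = F b - F a)
    (hL : Tendsto (fun c => ∫ t in (0 : ℝ)..c, f t) atTop (𝓝 L)) :
    Tendsto F atTop (𝓝 (F 0 + L)) :=
  (tendsto_const_nhds.add hL).congr fun c => by rw [hF]; ring

theorem tendsto_integral_comp_sub_right_atBot
    (hF : ∀ x, Tendsto (fun c => ∫ t in c..x, f t) atBot (𝓝 (F x))) (t y : ℝ) :
    Tendsto (fun c => ∫ x in c..t, f (x - y)) atBot (𝓝 (F (t - y))) := by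
  have : Tendsto (fun c : ℝ => c - y) atBot atBot := by
    simpa only [sub_eq_add_neg, id_eq] using tendsto_atBot_add_const_right atBot (-y) tendsto_id
  simpa only [integral_comp_sub_right, Function.comp_def] using (hF (t - y)).comp this

end ImproperPrimitive

theorem Continuous.bddAbove_range_abs_of_tendsto {φ : ℝ → ℝ} {a b : ℝ} (hφ : Continuous φ)
    (hbot : Tendsto φ atBot (𝓝 a)) (htop : Tendsto φ atTop (𝓝 b)) :
    BddAbove (range fun x => |φ x|) := by
  obtain ⟨B, hB⟩ := eventually_atBot.1 (hbot.abs.eventually (eventually_le_nhds (lt_add_one |a|)))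
  obtain ⟨A, hA⟩ := eventually_atTop.1 (htop.abs.eventually (eventually_le_nhds (lt_add_one |b|)))
  obtain ⟨C, hC⟩ := (isCompact_Icc (a := B) (b := A)).bddAbove_image hφ.abs.continuousOn
  refine ⟨max C (max (|a| + 1) (|b| + 1)), ?_⟩
  rintro _ ⟨x, rfl⟩
  rcases le_total x B with hxB | hBx
  · exact (hB x hxB).trans (le_max_of_le_right (le_max_left _ _))
  rcases le_total A x with hAx | hxA
  · exact (hA x hAx).trans (le_max_of_le_right (le_max_right _ _))
  · exact (hC ⟨x, ⟨hBx, hxA⟩, rfl⟩).trans (le_max_left _ _)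

theorem bddAbove_range_abs_of_tendsto_integral_atBot {f F : ℝ → ℝ} {L : ℝ}
    (hf : ∀ a b, IntervalIntegrable f volume a b)
    (hF : ∀ x, Tendsto (fun c => ∫ t in c..x, f t) atBot (𝓝 (F x)))
    (hL : Tendsto (fun c => ∫ t in (0 : ℝ)..c, f t) atTop (𝓝 L)) :
    BddAbove (range fun x => |F x|) :=
  have hFab := integral_eq_sub_of_tendsto_integral_atBot hf hF
  (continuous_of_integral_eq_sub hf hFab).bddAbove_range_abs_of_tendsto
    (tendsto_atBot_zero_of_tendsto_integral_atBot hf hF) (tendsto_atTop_of_integral_eq_sub hFab hL)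

section IntegrationByParts

variable {u u' v v' : ℝ → ℝ} {a b : ℝ}

theorem absolutelyContinuousOnInterval_of_integral_eq_sub (hu' : IntervalIntegrable u' volume a b)
    (hu : ∀ x, ∫ t in a..x, u' t = u x - u a) : AbsolutelyContinuousOnInterval u a b := by
  have hac := hu'.absolutelyContinuousOnInterval_intervalIntegral (c := a) left_mem_uIcc
  have : u = fun x => (∫ t in a..x, u' t) + u a := funext fun x => by rw [hu]; ring
  rw [this]
  unfold AbsolutelyContinuousOnInterval at hac ⊢
  simpa only [dist_add_right] using hac

theorem ae_deriv_eq_of_integral_eq_sub (hu' : IntervalIntegrable u' volume a b)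
    (hu : ∀ x, ∫ t in a..x, u' t = u x - u a) :
    ∀ᵐ x, x ∈ uIcc a b → deriv u x = u' x := by
  have : u = fun x => (∫ t in a..x, u' t) + u a := funext fun x => by rw [hu]; ring
  filter_upwards [hu'.ae_hasDerivAt_integral] with x hx hxab
  rw [this]
  exact ((hx hxab a left_mem_uIcc).add_const _).deriv

theorem integral_mul_eq_sub_sub_of_integral_eq_sub (hu' : IntervalIntegrable u' volume a b)
    (hv' : IntervalIntegrable v' volume a b)
    (hu : ∀ x, ∫ t in a..x, u' t = u x - u a) (hv : ∀ x, ∫ t in a..x, v' t = v x - v a) :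
    ∫ x in a..b, u x * v' x = u b * v b - u a * v a - ∫ x in a..b, u' x * v x := by
  have h_left : ∫ x in a..b, u x * deriv v x = ∫ x in a..b, u x * v' x :=
    integral_congr_ae <| (ae_deriv_eq_of_integral_eq_sub hv' hv).mono fun x hx hx' => by
      rw [hx (uIoc_subset_uIcc hx')]
  have h_right : ∫ x in a..b, deriv u x * v x = ∫ x in a..b, u' x * v x :=
    integral_congr_ae <| (ae_deriv_eq_of_integral_eq_sub hu' hu).mono fun x hx hx' => by
      rw [hx (uIoc_subset_uIcc hx')]
  rw [← h_left, ← h_right]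
  exact (absolutelyContinuousOnInterval_of_integral_eq_sub hu' hu).integral_mul_deriv_eq_deriv_mul
    (absolutelyContinuousOnInterval_of_integral_eq_sub hv' hv)

end IntegrationByParts

theorem integral_comp_sub_mul_eq_of_integral_eq_sub {f F g G : ℝ → ℝ}
    (hf : ∀ a b, IntervalIntegrable f volume a b) (hg : ∀ a b, IntervalIntegrable g volume a b)
    (hF : ∀ a b, ∫ t in a..b, f t = F b - F a)
    (hG : ∀ a b, ∫ t in a..b, g t = G b - G a) (x c d : ℝ) :
    ∫ y in c..d, f (x - y) * G y
      = F (x - c) * G c - F (x - d) * G d + ∫ y in c..d, F (x - y) * g y := by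
  have hf' : IntervalIntegrable (fun y => f (x - y)) volume c d := by
    simpa only [sub_sub_cancel] using (hf (x - c) (x - d)).comp_sub_left x
  have ibp := integral_mul_eq_sub_sub_of_integral_eq_sub (u := fun y => F (x - y))
    (u' := fun y => -f (x - y)) (v := G) hf'.neg (hg c d)
    (fun y => by rw [intervalIntegral.integral_neg, integral_comp_sub_left, hF]; ring) (hG c)
  simp only [neg_mul, intervalIntegral.integral_neg] at ibp
  linarith

theorem hasImpInt_of_integral_eq_sub_add {φ ψ P : ℝ → ℝ} (hψ : Integrable ψ)
    (hbot : Tendsto P atBot (𝓝 0)) (htop : Tendsto P atTop (𝓝 0))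
    (h : ∀ c d, ∫ y in c..d, φ y = P c - P d + ∫ y in c..d, ψ y) :
    HasImpInt φ (∫ y, ψ y) := by
  refine ⟨-P 0 + ∫ y in Iic 0, ψ y, P 0 + ∫ y in Ioi 0, ψ y, ?_, ?_, ?_⟩
  · have := hbot.sub (tendsto_const_nhds (x := P 0)) |>.add
      (intervalIntegral_tendsto_integral_Iic 0 hψ.integrableOn tendsto_id)
    simpa only [h, zero_sub, id] using this
  · have := (tendsto_const_nhds (x := P 0)).sub htop |>.add
      (intervalIntegral_tendsto_integral_Ioi 0 hψ.integrableOn tendsto_id)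
    simpa only [h, sub_zero, id] using this
  · rw [← integral_Iic_add_Ioi hψ.integrableOn hψ.integrableOn]; ring

theorem hasImpInt_comp_sub_mul {f F g G : ℝ → ℝ} {M : ℝ}
    (hf : ∀ a b, IntervalIntegrable f volume a b) (hg : ∀ a b, IntervalIntegrable g volume a b)
    (hF : ∀ a b, ∫ t in a..b, f t = F b - F a) (hG : ∀ a b, ∫ t in a..b, g t = G b - G a)
    (hM : ∀ x, |F x| ≤ M) (hGbot : Tendsto G atBot (𝓝 0)) (hGtop : Tendsto G atTop (𝓝 0))
    (x : ℝ) (hFg : Integrable fun y => F (x - y) * g y) :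
    HasImpInt (fun y => f (x - y) * G y) (∫ y, F (x - y) * g y) := by
  have hF_bdd : ∀ l : Filter ℝ, IsBoundedUnder (· ≤ ·) l (norm ∘ fun y => F (x - y)) :=
    fun _ => isBoundedUnder_of ⟨M, fun y => hM (x - y)⟩
  exact hasImpInt_of_integral_eq_sub_add hFg
    (isBoundedUnder_le_mul_tendsto_zero (hF_bdd _) hGbot)
    (isBoundedUnder_le_mul_tendsto_zero (hF_bdd _) hGtop)
    (integral_comp_sub_mul_eq_of_integral_eq_sub hf hg hF hG x)

section Convolution

variable {G : Type*} [AddGroup G] [MeasurableSpace G] [MeasurableAdd₂ G] [MeasurableNeg G]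
  {μ : Measure G} [SFinite μ] [μ.IsAddRightInvariant] {φ ψ : G → ℝ}

theorem integrable_prod_sub_mul (hφ : Integrable φ μ) (hψ : Integrable ψ μ) :
    Integrable (fun p : G × G => φ (p.1 - p.2) * ψ p.2) (μ.prod μ) := by
  simpa only [ContinuousLinearMap.mul_apply', mul_comm] using
    hψ.convolution_integrand (ContinuousLinearMap.mul ℝ ℝ) hφ

theorem integrable_integral_sub_mul (hφ : Integrable φ μ) (hψ : Integrable ψ μ) :
    Integrable (fun x => ∫ y, φ (x - y) * ψ y ∂μ) μ :=
  (integrable_prod_sub_mul hφ hψ).integral_prod_left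

theorem integral_abs_integral_sub_mul_le (hφ : Integrable φ μ) (hψ : Integrable ψ μ) :
    ∫ x, |∫ y, φ (x - y) * ψ y ∂μ| ∂μ ≤ (∫ x, |φ x| ∂μ) * ∫ x, |ψ x| ∂μ := by
  calc ∫ x, |∫ y, φ (x - y) * ψ y ∂μ| ∂μ ≤ ∫ x, ∫ y, |φ (x - y)| * |ψ y| ∂μ ∂μ := by
        refine integral_mono (integrable_integral_sub_mul hφ hψ).abs
          (integrable_integral_sub_mul hφ.abs hψ.abs) fun x => ?_
        simpa only [abs_mul] using
          MeasureTheory.abs_integral_le_integral_abs (f := fun y => φ (x - y) * ψ y) (μ := μ)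
    _ = (∫ x, |ψ x| ∂μ) * ∫ x, |φ x| ∂μ := by
        simpa only [convolution, ContinuousLinearMap.mul_apply', mul_comm] using
          integral_convolution (ContinuousLinearMap.mul ℝ ℝ) hψ.abs hφ.abs (μ := μ) (ν := μ)
    _ = (∫ x, |φ x| ∂μ) * ∫ x, |ψ x| ∂μ := mul_comm _ _

end Convolution

section Iic

variable {φ ψ : ℝ → ℝ}

theorem setIntegral_Iic_comp_sub_right (φ : ℝ → ℝ) (t y : ℝ) :
    ∫ x in Iic t, φ (x - y) = ∫ x in Iic (t - y), φ x := by
  rw [← (measurePreserving_sub_right volume y).setIntegral_preimage_emb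
    (measurableEmbedding_subRight y) φ (Iic (t - y)), preimage_sub_const_Iic, sub_add_cancel]

theorem integral_mul_setIntegral_Iic_sub_comm (hφ : Integrable φ) (hψ : Integrable ψ) (a : ℝ) :
    ∫ y, φ y * ∫ s in Iic (a - y), ψ s = ∫ s, ψ s * ∫ y in Iic (a - s), φ y := by
  set K : ℝ → ℝ → ℝ := fun y s => {p : ℝ × ℝ | p.1 + p.2 ≤ a}.indicator
    (fun p => φ p.1 * ψ p.2) (y, s)
  have hK : Integrable (Function.uncurry K) (volume.prod volume) :=
    (hφ.mul_prod hψ).indicator (measurableSet_le (by fun_prop) measurable_const)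
  have inner_left : ∀ y, ∫ s, K y s = φ y * ∫ s in Iic (a - y), ψ s := fun y => by
    rw [← MeasureTheory.integral_const_mul, ← MeasureTheory.integral_indicator measurableSet_Iic]
    congr 1; ext s
    simp only [K, indicator_apply, mem_ofPred_eq, mem_Iic, le_sub_iff_add_le']
  have inner_right : ∀ s, ∫ y, K y s = ψ s * ∫ y in Iic (a - s), φ y := fun s => by
    rw [mul_comm, ← MeasureTheory.integral_mul_const,
      ← MeasureTheory.integral_indicator measurableSet_Iic]
    congr 1; ext y
    simp only [K, indicator_apply, mem_ofPred_eq, mem_Iic, le_sub_iff_add_le]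
  simp_rw [← inner_left, ← inner_right]
  exact integral_integral_swap hK

theorem setIntegral_Iic_integral_sub_mul (hφ : Integrable φ) (hψ : Integrable ψ) (t : ℝ) :
    ∫ x in Iic t, ∫ y, φ (x - y) * ψ y = ∫ y, φ (t - y) * ∫ s in Iic y, ψ s := by
  have hK : Integrable (Function.uncurry fun x y => φ (x - y) * ψ y)
      ((volume.restrict (Iic t)).prod volume) := by
    have := (integrable_prod_sub_mul hφ hψ).restrict (s := Iic t ×ˢ univ)
    rwa [← Measure.prod_restrict, Measure.restrict_univ] at this
  calc ∫ x in Iic t, ∫ y, φ (x - y) * ψ y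
      = ∫ y, ψ y * ∫ s in Iic (t - y), φ s := by
        rw [integral_integral_swap hK]
        congr 1; ext y
        rw [MeasureTheory.integral_mul_const, setIntegral_Iic_comp_sub_right, mul_comm]
    _ = ∫ s, φ s * ∫ y in Iic (t - s), ψ y := integral_mul_setIntegral_Iic_sub_comm hψ hφ t
    _ = ∫ y, φ (t - y) * ∫ s in Iic y, ψ s := by
        rw [← integral_sub_left_eq_self _ volume t]
        simp only [sub_sub_cancel]

end Iic

theorem abs_integral_mul_le_of_abs_le {α : Type*} [MeasurableSpace α] {μ : Measure α}
    {u v : α → ℝ} {M : ℝ} (hv : Integrable v μ) (hu : ∀ x, |u x| ≤ M) :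
    |∫ x, u x * v x ∂μ| ≤ M * ∫ x, |v x| ∂μ := by
  rw [← Real.norm_eq_abs, ← MeasureTheory.integral_const_mul]
  refine norm_integral_le_of_norm_le (hv.abs.const_mul M) (ae_of_all _ fun x => ?_)
  rw [Real.norm_eq_abs, abs_mul]
  exact mul_le_mul_of_nonneg_right (hu x) (abs_nonneg _)

theorem convolution_transfer_general (f g F G : ℝ → ℝ)
    (hfloc : ∀ c d : ℝ, IntervalIntegrable f volume c d)
    (hF : ∀ x : ℝ, Tendsto (fun c => ∫ t in c..x, f t) atBot (𝓝 (F x)))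
    (hfimp : ∃ L : ℝ, Tendsto (fun c => ∫ t in (0:ℝ)..c, f t) atTop (𝓝 L))
    (hg : Integrable g)
    (hG : ∀ x : ℝ, G x = ∫ t in Set.Iic x, g t)
    (hFint : Integrable F) (hGint : Integrable G)
    (hG0 : Tendsto G atTop (𝓝 0)) :
    ∃ h : ℝ → ℝ,
      (∀ x : ℝ, HasImpInt (fun y => f (x - y) * G y) (h x) ∧
        h x = ∫ y : ℝ, F (x - y) * g y) ∧
      (∀ t : ℝ, ∃ Φ : ℝ → ℝ,
        (∀ y : ℝ, Tendsto (fun c => ∫ x in c..t, f (x - y) * G y) atBot (𝓝 (Φ y))) ∧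
        Integrable Φ ∧
        Tendsto (fun c => ∫ x in c..t, h x) atBot (𝓝 (∫ y : ℝ, Φ y))) ∧
      Integrable h ∧
      (∫ x : ℝ, |h x|) ≤ (∫ x : ℝ, |F x|) * (∫ x : ℝ, |g x|) ∧
      (⨆ t : ℝ, |∫ x in Set.Iic t, h x|) ≤ (⨆ t : ℝ, |F t|) * ∫ x : ℝ, |G x| := by
  have hFab := integral_eq_sub_of_tendsto_integral_atBot hfloc hF
  have hg_loc : ∀ a b, IntervalIntegrable g volume a b := fun _ _ => hg.intervalIntegrable
  have hG_prim : ∀ x, Tendsto (fun c => ∫ t in c..x, g t) atBot (𝓝 (G x)) := fun x =>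
    hG x ▸ intervalIntegral_tendsto_integral_Iic x hg.integrableOn tendsto_id
  obtain ⟨L, hL⟩ := hfimp
  have hM : ∀ x, |F x| ≤ ⨆ t, |F t| :=
    le_ciSup (bddAbove_range_abs_of_tendsto_integral_atBot hfloc hF hL)
  have hF_mul : ∀ {k : ℝ → ℝ}, Integrable k → ∀ x, Integrable (fun y => F (x - y) * k y) :=
    fun hk x => hk.bdd_mul ((continuous_of_integral_eq_sub hfloc hFab).comp
      (continuous_sub_left x)).aestronglyMeasurable (ae_of_all _ fun y => hM (x - y))
  have hAlex : ∀ t, ∫ x in Set.Iic t, (∫ y, F (x - y) * g y) = ∫ y, F (t - y) * G y := fun t => by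
    simpa only [← hG] using setIntegral_Iic_integral_sub_mul hFint hg t
  refine ⟨fun x => ∫ y, F (x - y) * g y, fun x => ⟨?_, rfl⟩,
    fun t => ⟨fun y => F (t - y) * G y, fun y => ?_, hF_mul hGint t, ?_⟩,
    integrable_integral_sub_mul hFint hg, integral_abs_integral_sub_mul_le hFint hg,
    ciSup_le fun t => ?_⟩
  · exact hasImpInt_comp_sub_mul hfloc hg_loc hFab
      (integral_eq_sub_of_tendsto_integral_atBot hg_loc hG_prim) hM
      (tendsto_atBot_zero_of_tendsto_integral_atBot hg_loc hG_prim) hG0 x (hF_mul hg x)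
  · simpa only [intervalIntegral.integral_mul_const] using
      (tendsto_integral_comp_sub_right_atBot hF t y).mul_const (G y)
  · exact hAlex t ▸ intervalIntegral_tendsto_integral_Iic t
      (integrable_integral_sub_mul hFint hg).integrableOn tendsto_id
  · exact hAlex t ▸ abs_integral_mul_le_of_abs_le hGint fun y => hM (t - y)

/-- **Theorem `Four-Conv-Lem`.** Let `f` have improper primitive `F x = ∫_{-∞}^x f` and
convergent improper integral over `ℝ`; let `g ∈ L¹ ∩ BV(ℝ)` with `G x = ∫_{-∞}^x g`;
assume `F, G ∈ L¹(ℝ)` and `G(∞) = 0`. Then `(f*G)(x)` exists as an improper integral and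
equals `(F*g)(x)`; the iterated integrals `∫_{-∞}^t ∫_{-∞}^∞ f(x−y)G(y) dy dx` and
`∫_{-∞}^∞ ∫_{-∞}^t f(x−y)G(y) dx dy` agree; and `‖f*G‖₁ ≤ ‖F‖₁‖g‖₁`,
`‖f*G‖_A ≤ ‖f‖_A‖G‖₁`. -/
theorem convolution_transfer (f g F G : ℝ → ℝ)
    (hfloc : ∀ c d : ℝ, IntervalIntegrable f volume c d)
    (hF : ∀ x : ℝ, Tendsto (fun c => ∫ t in c..x, f t) atBot (𝓝 (F x)))
    (hfimp : ∃ L : ℝ, Tendsto (fun c => ∫ t in (0:ℝ)..c, f t) atTop (𝓝 L))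
    (hg : Integrable g) (hgBV : BoundedVariationOn g Set.univ)
    (hG : ∀ x : ℝ, G x = ∫ t in Set.Iic x, g t)
    (hFint : Integrable F) (hGint : Integrable G)
    (hG0 : Tendsto G atTop (𝓝 0)) :
    ∃ h : ℝ → ℝ,
      (∀ x : ℝ, HasImpInt (fun y => f (x - y) * G y) (h x) ∧
        h x = ∫ y : ℝ, F (x - y) * g y) ∧
      (∀ t : ℝ, ∃ Φ : ℝ → ℝ,
        (∀ y : ℝ, Tendsto (fun c => ∫ x in c..t, f (x - y) * G y) atBot (𝓝 (Φ y))) ∧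
        Integrable Φ ∧
        Tendsto (fun c => ∫ x in c..t, h x) atBot (𝓝 (∫ y : ℝ, Φ y))) ∧
      Integrable h ∧
      (∫ x : ℝ, |h x|) ≤ (∫ x : ℝ, |F x|) * (∫ x : ℝ, |g x|) ∧
      (⨆ t : ℝ, |∫ x in Set.Iic t, h x|) ≤ (⨆ t : ℝ, |F t|) * ∫ x : ℝ, |G x| :=
  convolution_transfer_general f g F G hfloc hF hfimp hg hG hFint hGint hG0
end

section
/- Let f : ℝ → ℝ be Lebesgue integrable on every compact interval such that the improper integral ∫_{-∞}^∞ f exists, and suppose there is a > 0 such that f is of bounded variation on (-∞,-a] and of bounded variation on [a,∞). Then for every y ∈ ℝ the Fourier transform f̂(y) = ∫_{-∞}^∞ f(x)e^{−2πixy} dx exists as an improper integral. -/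
open MeasureTheory Filter Topology intervalIntegral

/-- The improper integral `∫_{-∞}^∞ h = z` (complex-valued). -/
def HasImpIntC (h : ℝ → ℂ) (z : ℂ) : Prop :=
  ∃ z₁ z₂ : ℂ,
    Tendsto (fun c => ∫ x in c..(0:ℝ), h x) atBot (𝓝 z₁) ∧
    Tendsto (fun c => ∫ x in (0:ℝ)..c, h x) atTop (𝓝 z₂) ∧ z = z₁ + z₂

/-- The Fourier kernel `e^{-2πixy}`. -/
noncomputable def fourierKernel (x y : ℝ) : ℂ :=
  Complex.exp (-(2 * Real.pi * Complex.I * x * y))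

/-!
The key estimate is the second mean value theorem in the form
`‖∫_p^q f k‖ ≤ M (|f p| + 2 V_{[p,q]} f)` whenever all primitives `∫_p^t k` are bounded by `M`.
It comes from a fine partition of `[p, q]`: Abel summation handles the step function taking the
left-endpoint values of `f`, and the remainder is at most variation × mesh × sup ‖k‖.
For `y ≠ 0` the primitives of `e^{-2πixy}` are bounded by `1/(π|y|)`. A function of bounded
variation on `[a, ∞)` has a limit at `∞`, which is `0` because `∫_0^∞ f` converges, and its tail
variation tends to `0`; hence the partial Fourier integrals are Cauchy. The half-line `(-∞, 0]`
reduces to `[0, ∞)` through `x ↦ -x`.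
-/

open Set Finset

section AbelSummation

variable {E : Type*} [NormedAddCommGroup E] [NormedSpace ℝ E]

theorem sum_range_smul_sub_eq (g : ℕ → ℝ) {Φ : ℕ → E} (hΦ : Φ 0 = 0) (n : ℕ) :
    ∑ i ∈ range n, g i • (Φ (i + 1) - Φ i) =
      g n • Φ n - ∑ i ∈ range n, (g (i + 1) - g i) • Φ (i + 1) := by
  induction n with
  | zero => simp [hΦ]
  | succ n ih =>
    rw [sum_range_succ, ih, sum_range_succ]
    simp only [sub_smul, smul_sub]
    abel

theorem norm_sum_range_smul_sub_le (g : ℕ → ℝ) {Φ : ℕ → E} {M : ℝ} (n : ℕ) (hΦ0 : Φ 0 = 0)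
    (hΦ : ∀ i ≤ n, ‖Φ i‖ ≤ M) :
    ‖∑ i ∈ range n, g i • (Φ (i + 1) - Φ i)‖ ≤
      M * (|g 0| + 2 * ∑ i ∈ range n, |g (i + 1) - g i|) := by
  have hM : 0 ≤ M := (norm_nonneg _).trans (hΦ 0 (Nat.zero_le n))
  have hgn : |g n| ≤ |g 0| + ∑ i ∈ range n, |g (i + 1) - g i| := by
    calc |g n| = |g 0 + ∑ i ∈ range n, (g (i + 1) - g i)| := by rw [sum_range_sub]; ring_nf
      _ ≤ |g 0| + ∑ i ∈ range n, |g (i + 1) - g i| :=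
        (abs_add_le _ _).trans (by gcongr; exact abs_sum_le_sum_abs _ _)
  rw [sum_range_smul_sub_eq g hΦ0]
  calc ‖g n • Φ n - ∑ i ∈ range n, (g (i + 1) - g i) • Φ (i + 1)‖
      ≤ |g n| * M + ∑ i ∈ range n, |g (i + 1) - g i| * M := by
        refine (norm_sub_le _ _).trans (add_le_add ?_ ((norm_sum_le _ _).trans ?_))
        · rw [norm_smul, Real.norm_eq_abs]
          exact mul_le_mul_of_nonneg_left (hΦ n le_rfl) (abs_nonneg _)
        · refine sum_le_sum fun i hi => ?_
          rw [norm_smul, Real.norm_eq_abs]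
          exact mul_le_mul_of_nonneg_left (hΦ _ (mem_range.1 hi)) (abs_nonneg _)
    _ ≤ M * (|g 0| + 2 * ∑ i ∈ range n, |g (i + 1) - g i|) := by
        rw [← sum_mul]; nlinarith

end AbelSummation

section Variation

variable {f : ℝ → ℝ} {x : ℕ → ℝ} {n : ℕ}

theorem sum_toReal_eVariationOn_Icc (hx : Monotone x)
    (hf : BoundedVariationOn f (Icc (x 0) (x n))) :
    ∑ i ∈ range n, (eVariationOn f (Icc (x i) (x (i + 1)))).toReal =
      (eVariationOn f (Icc (x 0) (x n))).toReal := by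
  rw [← eVariationOn.sum' f hx, ENNReal.toReal_sum]
  intro i hi
  refine hf.mono (Icc_subset_Icc (hx (Nat.zero_le i)) (hx ?_))
  exact mem_range.1 hi

theorem sum_range_abs_sub_le_eVariationOn (hx : Monotone x)
    (hf : BoundedVariationOn f (Icc (x 0) (x n))) :
    ∑ i ∈ range n, |f (x (i + 1)) - f (x i)| ≤ (eVariationOn f (Icc (x 0) (x n))).toReal := by
  rw [← sum_toReal_eVariationOn_Icc hx hf]
  refine sum_le_sum fun i hi => ?_
  have hi : i + 1 ≤ n := mem_range.1 hi
  rw [← Real.dist_eq]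
  exact (hf.mono (Icc_subset_Icc (hx (Nat.zero_le i)) (hx hi))).dist_le
    (right_mem_Icc.2 (hx i.le_succ)) (left_mem_Icc.2 (hx i.le_succ))

end Variation

theorem principal_Ici_inf_atTop {α : Type*} [Preorder α] (a : α) : 𝓟 (Ici a) ⊓ atTop = atTop :=
  inf_eq_right.2 (le_principal_iff.2 (Ici_mem_atTop a))

theorem BoundedVariationOn.tendsto_toReal_eVariationOn_Ici {α E : Type*} [LinearOrder α]
    [PseudoEMetricSpace E] {f : α → E} {a : α} (hf : BoundedVariationOn f (Ici a)) :
    Tendsto (fun y => (eVariationOn f (Ici y)).toReal) atTop (𝓝 0) := by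
  have h := (ENNReal.tendsto_toReal ENNReal.zero_ne_top).comp hf.tendsto_eVariationOn_Ici_zero
  rw [principal_Ici_inf_atTop] at h
  refine h.congr' ((eventually_ge_atTop a).mono fun y hy => ?_)
  simp [Ici_inter_Ici, sup_eq_right.2 hy]

theorem eq_zero_of_tendsto_of_tendsto_integral {E : Type*} [NormedAddCommGroup E]
    [NormedSpace ℝ E] [CompleteSpace E] {f : ℝ → E} {l L : E}
    (hf : ∀ c d : ℝ, IntervalIntegrable f volume c d)
    (hl : Tendsto f atTop (𝓝 l)) (hL : Tendsto (fun c => ∫ x in (0:ℝ)..c, f x) atTop (𝓝 L)) :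
    l = 0 := by
  have hshift : Tendsto (fun c => ∫ x in c..c + 1, f x) atTop (𝓝 0) := by
    have h := (hL.comp (tendsto_atTop_add_const_right _ 1 tendsto_id)).sub hL
    rw [sub_self] at h
    exact h.congr fun c => integral_interval_sub_left (hf 0 (c + 1)) (hf 0 c)
  have hmean : Tendsto (fun c => ∫ x in c..c + 1, f x) atTop (𝓝 l) := by
    refine Metric.tendsto_atTop.2 fun ε hε => ?_
    obtain ⟨N, hN⟩ := Metric.tendsto_atTop.1 hl (ε / 2) (half_pos hε)
    refine ⟨N, fun c hc => ?_⟩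
    have hbound : ∀ x ∈ uIoc c (c + 1), ‖f x - l‖ ≤ ε / 2 := fun x hx => by
      rw [uIoc_of_le (by linarith)] at hx
      exact (dist_eq_norm (f x) l ▸ hN x (hc.trans hx.1.le)).le
    have h := norm_integral_le_of_norm_le_const hbound
    rw [integral_sub (hf c (c + 1)) intervalIntegrable_const, intervalIntegral.integral_const] at h
    simp only [add_sub_cancel_left, one_smul, abs_one, mul_one] at h
    rw [dist_eq_norm]
    linarith
  exact tendsto_nhds_unique hmean hshift

section Dirichlet

variable {E : Type*} [NormedAddCommGroup E] [NormedSpace ℝ E] {f : ℝ → ℝ} {k : ℝ → E}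

theorem norm_integral_sub_smul_le {s t C : ℝ} (hst : s ≤ t) (hf : BoundedVariationOn f (Icc s t))
    (hk : ∀ u ∈ Icc s t, ‖k u‖ ≤ C) :
    ‖∫ u in s..t, (f u - f s) • k u‖ ≤ C * (eVariationOn f (Icc s t)).toReal * (t - s) := by
  have hbound : ∀ u ∈ uIoc s t, ‖(f u - f s) • k u‖ ≤ C * (eVariationOn f (Icc s t)).toReal := by
    intro u hu
    rw [uIoc_of_le hst] at hu
    have hu : u ∈ Icc s t := Ioc_subset_Icc_self hu
    rw [norm_smul, Real.norm_eq_abs, ← Real.dist_eq, mul_comm C]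
    exact mul_le_mul (hf.dist_le hu (left_mem_Icc.2 hst)) (hk u hu) (norm_nonneg _)
      ENNReal.toReal_nonneg
  simpa [abs_of_nonneg (sub_nonneg.2 hst)] using norm_integral_le_of_norm_le_const hbound

theorem integral_smul_eq_smul_integral_add {s t : ℝ} (hf : IntervalIntegrable f volume s t)
    (hk : Continuous k) :
    ∫ u in s..t, f u • k u = f s • (∫ u in s..t, k u) + ∫ u in s..t, (f u - f s) • k u := by
  simp only [sub_smul]
  rw [integral_sub (f := fun u => f u • k u) (g := fun u => f s • k u)
    (hf.smul_continuousOn hk.continuousOn) ((hk.intervalIntegrable _ _).smul _),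
    intervalIntegral.integral_smul]
  abel

theorem norm_integral_smul_le_of_partition {x : ℕ → ℝ} {n : ℕ} {C M δ : ℝ} (hx : Monotone x)
    (hf : IntervalIntegrable f volume (x 0) (x n)) (hk : Continuous k)
    (hfV : BoundedVariationOn f (Icc (x 0) (x n))) (hC : ∀ u ∈ Icc (x 0) (x n), ‖k u‖ ≤ C)
    (hM : ∀ t ∈ Icc (x 0) (x n), ‖∫ u in x 0..t, k u‖ ≤ M) (hδ : ∀ i < n, x (i + 1) - x i ≤ δ) :
    ‖∫ u in x 0..x n, f u • k u‖ ≤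
      M * (|f (x 0)| + 2 * (eVariationOn f (Icc (x 0) (x n))).toReal) +
        C * (eVariationOn f (Icc (x 0) (x n))).toReal * δ := by
  set V := (eVariationOn f (Icc (x 0) (x n))).toReal
  set Φ := fun t => ∫ u in x 0..t, k u
  have hIcc : ∀ i < n, Icc (x i) (x (i + 1)) ⊆ Icc (x 0) (x n) := fun i hi =>
    Icc_subset_Icc (hx (Nat.zero_le i)) (hx hi)
  have hC0 : 0 ≤ C := (norm_nonneg _).trans (hC _ (left_mem_Icc.2 (hx (Nat.zero_le n))))
  have hf_piece : ∀ i < n, IntervalIntegrable f volume (x i) (x (i + 1)) := fun i hi =>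
    hf.mono_set (by simpa [Set.uIcc_of_le, hx (Nat.zero_le n), hx i.le_succ] using hIcc i hi)
  have hfk : ∀ i < n, IntervalIntegrable (fun u => f u • k u) volume (x i) (x (i + 1)) :=
    fun i hi => (hf_piece i hi).smul_continuousOn hk.continuousOn
  have hpiece : ∀ i < n, ∫ u in x i..x (i + 1), f u • k u =
      f (x i) • (Φ (x (i + 1)) - Φ (x i)) + ∫ u in x i..x (i + 1), (f u - f (x i)) • k u :=
    fun i hi => by
      rw [integral_interval_sub_left (hk.intervalIntegrable _ _) (hk.intervalIntegrable _ _)]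
      exact integral_smul_eq_smul_integral_add (hf_piece i hi) hk
  have hΦ : ∀ i ≤ n, ‖Φ (x i)‖ ≤ M := fun i hi =>
    hM _ ⟨hx (Nat.zero_le i), hx hi⟩
  have hM0 : 0 ≤ M := (norm_nonneg _).trans (hΦ 0 (Nat.zero_le n))
  have hmain : ‖∑ i ∈ range n, f (x i) • (Φ (x (i + 1)) - Φ (x i))‖ ≤
      M * (|f (x 0)| + 2 * V) :=
    (norm_sum_range_smul_sub_le (f ∘ x) n (Φ := Φ ∘ x) integral_same hΦ).trans
      (by grw [Function.comp_def, sum_range_abs_sub_le_eVariationOn hx hfV])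
  have herr : ∀ i < n, ‖∫ u in x i..x (i + 1), (f u - f (x i)) • k u‖ ≤
      C * (eVariationOn f (Icc (x i) (x (i + 1)))).toReal * δ := fun i hi =>
    (norm_integral_sub_smul_le (hx i.le_succ) (hfV.mono (hIcc i hi))
      fun u hu => hC u (hIcc i hi hu)).trans
      (mul_le_mul_of_nonneg_left (hδ i hi) (by positivity))
  rw [← sum_integral_adjacent_intervals hfk, sum_congr rfl fun i hi => hpiece i (mem_range.1 hi),
    sum_add_distrib]
  calc _ ≤ ‖∑ i ∈ range n, f (x i) • (Φ (x (i + 1)) - Φ (x i))‖ +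
        ∑ i ∈ range n, ‖∫ u in x i..x (i + 1), (f u - f (x i)) • k u‖ :=
        (norm_add_le _ _).trans (by gcongr; exact norm_sum_le _ _)
    _ ≤ M * (|f (x 0)| + 2 * V) +
        ∑ i ∈ range n, C * (eVariationOn f (Icc (x i) (x (i + 1)))).toReal * δ :=
        add_le_add hmain (sum_le_sum fun i hi => herr i (mem_range.1 hi))
    _ = M * (|f (x 0)| + 2 * V) + C * V * δ := by
        rw [← sum_mul, ← mul_sum, sum_toReal_eVariationOn_Icc hx hfV]

theorem norm_integral_smul_le_of_boundedVariationOn {b c M : ℝ} (hbc : b ≤ c)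
    (hf : IntervalIntegrable f volume b c) (hk : Continuous k)
    (hfV : BoundedVariationOn f (Icc b c)) (hM : ∀ t ∈ Icc b c, ‖∫ u in b..t, k u‖ ≤ M) :
    ‖∫ u in b..c, f u • k u‖ ≤ M * (|f b| + 2 * (eVariationOn f (Icc b c)).toReal) := by
  set V := (eVariationOn f (Icc b c)).toReal
  obtain ⟨C, hC⟩ := (isCompact_Icc (a := b) (b := c)).exists_bound_of_continuousOn hk.continuousOn
  have hpartition : ∀ n : ℕ, 0 < n →
      ‖∫ u in b..c, f u • k u‖ ≤ M * (|f b| + 2 * V) + C * V * ((c - b) / n) := by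
    intro n hn
    set x : ℕ → ℝ := fun i => b + i * ((c - b) / n)
    have hx : Monotone x := fun i j hij => by
      have : 0 ≤ (c - b) / n := div_nonneg (sub_nonneg.2 hbc) n.cast_nonneg
      simp only [x]; gcongr
    have hx0 : x 0 = b := by simp [x]
    have hxn : x n = c := by simp [x]; field_simp; ring
    have := norm_integral_smul_le_of_partition (n := n) (δ := (c - b) / n) hx
      (by rwa [hx0, hxn]) hk (by rwa [hx0, hxn]) (by rwa [hx0, hxn]) (by rwa [hx0, hxn])
      fun i _ => le_of_eq (by simp only [x]; push_cast; ring)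
    rwa [hx0, hxn] at this
  refine ge_of_tendsto ?_ ((eventually_gt_atTop 0).mono hpartition)
  simpa using tendsto_const_nhds.add
    (tendsto_const_nhds.mul (tendsto_const_div_atTop_nhds_zero_nat (c - b)))

theorem exists_tendsto_integral_smul_atTop [CompleteSpace E] {a M : ℝ}
    (hf : ∀ c d : ℝ, IntervalIntegrable f volume c d) (hk : Continuous k)
    (hkM : ∀ s t, ‖∫ u in s..t, k u‖ ≤ M) (hfV : BoundedVariationOn f (Ici a))
    (hf0 : Tendsto f atTop (𝓝 0)) :
    ∃ z, Tendsto (fun c => ∫ u in (0:ℝ)..c, f u • k u) atTop (𝓝 z) := by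
  have hM : 0 ≤ M := (norm_nonneg _).trans (hkM 0 0)
  have htail : Tendsto (fun p => M * (|f p| + 2 * (eVariationOn f (Ici p)).toReal)) atTop
      (𝓝 0) := by
    simpa using tendsto_const_nhds.mul
      (hf0.abs.add (tendsto_const_nhds.mul hfV.tendsto_toReal_eVariationOn_Ici))
  have hfk : ∀ c d, IntervalIntegrable (fun u => f u • k u) volume c d := fun c d =>
    (hf c d).smul_continuousOn hk.continuousOn
  refine cauchySeq_tendsto_of_complete (Metric.cauchySeq_iff'.2 fun ε hε => ?_)
  obtain ⟨p, hpa, hp⟩ := ((eventually_ge_atTop a).and (htail.eventually (gt_mem_nhds hε))).exists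
  refine ⟨p, fun q hpq => ?_⟩
  have hIcc : Icc p q ⊆ Ici a := fun u hu => hpa.trans hu.1
  have hvar : (eVariationOn f (Icc p q)).toReal ≤ (eVariationOn f (Ici p)).toReal :=
    ENNReal.toReal_mono (hfV.mono (Ici_subset_Ici.2 hpa)) (eVariationOn.mono f Icc_subset_Ici_self)
  rw [dist_eq_norm, integral_interval_sub_left (hfk 0 q) (hfk 0 p)]
  calc ‖∫ u in p..q, f u • k u‖
      ≤ M * (|f p| + 2 * (eVariationOn f (Icc p q)).toReal) :=
        norm_integral_smul_le_of_boundedVariationOn hpq (hf p q) hk (hfV.mono hIcc)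
          fun t _ => hkM p t
    _ ≤ M * (|f p| + 2 * (eVariationOn f (Ici p)).toReal) := by gcongr
    _ < ε := hp

end Dirichlet

theorem fourierKernel_eq_exp (x y : ℝ) :
    fourierKernel x y = Complex.exp (-(2 * Real.pi * Complex.I * y) * x) := by
  unfold fourierKernel; ring_nf

theorem norm_fourierKernel (x y : ℝ) : ‖fourierKernel x y‖ = 1 := by
  rw [fourierKernel_eq_exp, Complex.norm_exp]
  simp

theorem continuous_fourierKernel (y : ℝ) : Continuous fun x => fourierKernel x y := by
  simp only [fourierKernel_eq_exp]
  fun_prop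

theorem fourierKernel_zero_right (x : ℝ) : fourierKernel x 0 = 1 := by
  simp [fourierKernel]

theorem fourierKernel_neg_left (x y : ℝ) : fourierKernel (-x) y = fourierKernel x (-y) := by
  simp only [fourierKernel, Complex.ofReal_neg, mul_neg, neg_mul]

theorem norm_integral_fourierKernel_le {y : ℝ} (hy : y ≠ 0) (s t : ℝ) :
    ‖∫ x in s..t, fourierKernel x y‖ ≤ 1 / (Real.pi * |y|) := by
  have hc : -(2 * Real.pi * Complex.I * y) ≠ 0 := by simp [Real.pi_ne_zero, hy]
  have hnorm : ‖-(2 * Real.pi * Complex.I * y)‖ = 2 * (Real.pi * |y|) := by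
    simp [abs_of_pos Real.pi_pos]; ring
  simp only [fourierKernel_eq_exp]
  rw [integral_exp_mul_complex hc, norm_div, hnorm, ← fourierKernel_eq_exp,
    ← fourierKernel_eq_exp, div_le_div_iff₀ (by positivity) (by positivity)]
  have h2 : ‖fourierKernel t y - fourierKernel s y‖ ≤ 2 :=
    (norm_sub_le _ _).trans (by rw [norm_fourierKernel, norm_fourierKernel]; norm_num)
  nlinarith [mul_pos Real.pi_pos (abs_pos.2 hy)]

theorem exists_tendsto_integral_mul_fourierKernel_atTop {f : ℝ → ℝ} {a L : ℝ}
    (hf : ∀ c d : ℝ, IntervalIntegrable f volume c d)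
    (hL : Tendsto (fun c => ∫ x in (0:ℝ)..c, f x) atTop (𝓝 L))
    (hfV : BoundedVariationOn f (Ici a)) (y : ℝ) :
    ∃ z, Tendsto (fun c => ∫ x in (0:ℝ)..c, (f x : ℂ) * fourierKernel x y) atTop (𝓝 z) := by
  rcases eq_or_ne y 0 with rfl | hy
  · refine ⟨L, ?_⟩
    simpa [fourierKernel_zero_right, integral_ofReal] using hL.ofReal
  obtain ⟨l, hl⟩ := hfV.exists_tendsto_atTop
  rw [principal_Ici_inf_atTop] at hl
  obtain rfl := eq_zero_of_tendsto_of_tendsto_integral hf hl hL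
  simp_rw [← Complex.real_smul]
  exact exists_tendsto_integral_smul_atTop hf (continuous_fourierKernel y)
    (norm_integral_fourierKernel_le hy) hfV hl

theorem tendsto_integral_atBot_iff_comp_neg {E : Type*} [NormedAddCommGroup E]
    [NormedSpace ℝ E] {h : ℝ → E} {z : E} :
    Tendsto (fun c => ∫ x in c..(0:ℝ), h x) atBot (𝓝 z) ↔
      Tendsto (fun c => ∫ x in (0:ℝ)..c, h (-x)) atTop (𝓝 z) := by
  simp [integral_comp_neg, ← tendsto_comp_neg_atTop_iff]

theorem fourier_transform_exists_general (f : ℝ → ℝ) (a : ℝ)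
    (hfloc : ∀ c d : ℝ, IntervalIntegrable f volume c d)
    (hfimp : ∃ L : ℝ, HasImpInt f L)
    (hBV₁ : BoundedVariationOn f (Set.Iic (-a)))
    (hBV₂ : BoundedVariationOn f (Set.Ici a)) :
    ∀ y : ℝ, ∃ z : ℂ, HasImpIntC (fun x => (f x : ℂ) * fourierKernel x y) z := by
  intro y
  obtain ⟨-, L₁, L₂, hL₁, hL₂, -⟩ := hfimp
  obtain ⟨z₂, hz₂⟩ := exists_tendsto_integral_mul_fourierKernel_atTop hfloc hL₂ hBV₂ y
  have hfloc_neg : ∀ c d : ℝ, IntervalIntegrable (fun x => f (-x)) volume c d := fun c d => by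
    simpa using (IntervalIntegrable.iff_comp_neg (f := f) (a := -c) (b := -d)).1 (hfloc _ _)
  have hBV_neg : BoundedVariationOn (fun x => f (-x)) (Ici a) := by
    rw [BoundedVariationOn, ← Function.comp_def,
      eVariationOn.comp_eq_of_antitoneOn f Neg.neg fun _ _ _ _ h => neg_le_neg h, image_neg_Ici]
    exact hBV₁
  obtain ⟨z₁, hz₁⟩ := exists_tendsto_integral_mul_fourierKernel_atTop hfloc_neg
    (tendsto_integral_atBot_iff_comp_neg.1 hL₁) hBV_neg (-y)
  refine ⟨z₁ + z₂, z₁, z₂, tendsto_integral_atBot_iff_comp_neg.2 ?_, hz₂, rfl⟩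
  simpa [fourierKernel_neg_left] using hz₁

/-- **Existence of the Fourier transform.** If `f` is Lebesgue integrable on every compact
interval, its improper integral over `ℝ` exists, and `f` is of bounded variation on
`(-∞,-a]` and on `[a,∞)` for some `a > 0`, then `f̂(y) = ∫_{-∞}^∞ f(x)e^{−2πixy} dx`
exists as an improper integral for every `y ∈ ℝ`. -/
theorem fourier_transform_exists (f : ℝ → ℝ) (a : ℝ) (ha : 0 < a)
    (hfloc : ∀ c d : ℝ, IntervalIntegrable f volume c d)
    (hfimp : ∃ L : ℝ, HasImpInt f L)
    (hBV₁ : BoundedVariationOn f (Set.Iic (-a)))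
    (hBV₂ : BoundedVariationOn f (Set.Ici a)) :
    ∀ y : ℝ, ∃ z : ℂ, HasImpIntC (fun x => (f x : ℂ) * fourierKernel x y) z :=
  fourier_transform_exists_general f a hfloc hfimp hBV₁ hBV₂
end
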